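/- Let 0 < s < 1 and let mu be a Radon measure on R^d. Let B be a ball with t-thin boundary and radius r, and let a : R^d -> R^d be a bounded measurable vector-valued function supported on 2B \ B. Then for all x in B, int_{2B \ B} |a(y)| / |y - x|^s dmu(y) <= C(s, d, t) * ||a||_infty * theta(2B), where theta(2B) = mu(2B)/(2r)^s. The same bound holds with the roles reversed: if a is supported on B, then int_B |a(y)|/|y-x|^s dmu(y) <= C ||a||_infty theta(2B) for all x in 2B \ B. -/

import Mathlib

/-! The integration domain `D` lies on the other side of `∂B` from `x`, so the segment from `x`
to any `y ∈ D` crosses `∂B` and `dist(y, ∂B) ≤ |y - x|`. The thin-boundary condition therefore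
gives the linear growth `μ(D ∩ B̄(x, ρ)) ≤ t μ(2B) ρ / r`. Cutting `D` into the dyadic annuli
`2⁻ⁿ⁻¹ R < |y - x| ≤ 2⁻ⁿ R` with `R = 4r`, the kernel is at most `(2⁻ⁿ⁻¹ R)⁻ˢ` on the `n`-th
one, so the annuli contribute a geometric series of ratio `2 ^ (s - 1) < 1`. -/

open MeasureTheory Metric

/-- A ball `B(x₀,r)` has `t`-thin boundary for `μ`. -/
def HasThinBoundary {d : ℕ} (μ : Measure (EuclideanSpace ℝ (Fin d))) (t : ℝ)
    (x₀ : EuclideanSpace ℝ (Fin d)) (r : ℝ) : Prop :=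
  ∀ lam : ℝ, 0 < lam →
    μ {y ∈ ball x₀ (2 * r) | infDist y (sphere x₀ r) ≤ lam * r}
      ≤ ENNReal.ofReal (t * lam) * μ (ball x₀ (2 * r))

/-- The average `s`-dimensional density `θ(B(x,r)) = μ(B(x,r))/r^s`. -/
noncomputable def thetaB {d : ℕ} (μ : Measure (EuclideanSpace ℝ (Fin d))) (s : ℝ)
    (x : EuclideanSpace ℝ (Fin d)) (r : ℝ) : ℝ :=
  (μ (ball x r)).toReal / r ^ s

open Set

theorem infDist_sphere_le_dist_of_mem_uIcc {E : Type*} [NormedAddCommGroup E] [NormedSpace ℝ E]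
    {x₀ x y : E} {r : ℝ} (hr : r ∈ uIcc (dist x x₀) (dist y x₀)) :
    infDist y (sphere x₀ r) ≤ dist y x := by
  have hseg : IsPreconnected (segment ℝ x y) := (convex_segment x y).isPreconnected
  have hcont : ContinuousOn (dist · x₀) (segment ℝ x y) :=
    (continuous_id.dist continuous_const).continuousOn
  obtain ⟨z, hz, rfl⟩ : r ∈ (dist · x₀) '' (segment ℝ x y) := by
    rcases le_total (dist x x₀) (dist y x₀) with h | h
    · rw [uIcc_of_le h] at hr
      exact hseg.intermediate_value (left_mem_segment ..) (right_mem_segment ..) hcont hr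
    · rw [uIcc_of_ge h] at hr
      exact hseg.intermediate_value (right_mem_segment ..) (left_mem_segment ..) hcont hr
  calc infDist y (sphere x₀ (dist z x₀)) ≤ dist y z := infDist_le_dist_of_mem (mem_sphere.2 rfl)
    _ ≤ dist y x := by
      rw [dist_comm y z, dist_comm y x, ← dist_add_dist_of_mem_segment hz]
      exact le_add_of_nonneg_left dist_nonneg

theorem ball_diff_singleton_subset_iUnion_closedBall_diff {X : Type*} [MetricSpace X] (x : X)
    {R c : ℝ} (hc0 : 0 < c) (hc1 : c < 1) :
    ball x R \ {x} ⊆ ⋃ n : ℕ, closedBall x (R * c ^ n) \ closedBall x (R * c ^ (n + 1)) := by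
  rintro y ⟨hyR, hyx⟩
  have hdist : 0 < dist y x := dist_pos.2 hyx
  have hR : 0 < R := hdist.trans hyR
  obtain ⟨n, hlow, hup⟩ := exists_nat_pow_near_of_lt_one (div_pos hdist hR)
    ((div_lt_one hR).2 (mem_ball.1 hyR)).le hc0 hc1
  refine mem_iUnion.2 ⟨n, mem_closedBall.2 ?_, fun h => ?_⟩
  · rwa [div_le_iff₀ hR, mul_comm] at hup
  · rw [lt_div_iff₀ hR, mul_comm] at hlow
    exact (mem_closedBall.1 h).not_gt hlow

theorem two_rpow_sub_one_lt_one {s : ℝ} (hs1 : s < 1) : (2 : ℝ) ^ (s - 1) < 1 :=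
  Real.rpow_lt_one_of_one_lt_of_neg one_lt_two (by linarith)

theorem inv_rpow_mul_half_pow_eq {s R K : ℝ} (hR : 0 < R) (n : ℕ) :
    ((R * 2⁻¹ ^ (n + 1)) ^ s)⁻¹ * (K * (R * 2⁻¹ ^ n))
      = 2 ^ s * K * R ^ (1 - s) * (2 ^ (s - 1)) ^ n := by
  set u := R * (2⁻¹ : ℝ) ^ n with hu
  have hu0 : 0 < u := by positivity
  have h1 : R * (2⁻¹ : ℝ) ^ (n + 1) = u / 2 := by rw [hu]; ring
  have h2 : u ^ (1 - s) = R ^ (1 - s) * (2 ^ (s - 1)) ^ n := by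
    rw [hu, Real.mul_rpow hR.le (by positivity), ← Real.rpow_pow_comm (by norm_num),
      Real.inv_rpow (by norm_num), ← Real.rpow_neg (by norm_num), neg_sub]
  have h3 : u ^ (1 - s) = u / u ^ s := by rw [Real.rpow_sub hu0, Real.rpow_one]
  rw [h1, Real.div_rpow hu0.le (by norm_num), inv_div, mul_assoc, ← h2, h3]
  field_simp

theorem setLIntegral_inv_dist_rpow_le_of_measure_closedBall_le {X : Type*} [MetricSpace X]
    [MeasurableSpace X] [OpensMeasurableSpace X] (μ : Measure X) {s : ℝ} (hs : 0 ≤ s)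
    (hs1 : s < 1) {x : X} {D : Set X} {K R : ℝ} (hK : 0 ≤ K) (hR : 0 < R)
    (hD : D ⊆ ball x R \ {x})
    (hgrowth : ∀ ρ, 0 < ρ → μ (D ∩ closedBall x ρ) ≤ ENNReal.ofReal (K * ρ)) :
    ∫⁻ y in D, ENNReal.ofReal (dist y x ^ s)⁻¹ ∂μ
      ≤ ENNReal.ofReal (2 ^ s / (1 - 2 ^ (s - 1)) * K * R ^ (1 - s)) := by
  set q : ℝ := 2 ^ (s - 1)
  have hq0 : 0 ≤ q := by positivity
  have hq1 : q < 1 := two_rpow_sub_one_lt_one hs1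
  set ρ : ℕ → ℝ := fun n => R * 2⁻¹ ^ n
  set A : ℕ → Set X := fun n => closedBall x (ρ n) \ closedBall x (ρ (n + 1))
  have hannulus (n : ℕ) : ∫⁻ y in D ∩ A n, ENNReal.ofReal (dist y x ^ s)⁻¹ ∂μ
      ≤ ENNReal.ofReal (2 ^ s * K * R ^ (1 - s) * q ^ n) := by
    calc ∫⁻ y in D ∩ A n, ENNReal.ofReal (dist y x ^ s)⁻¹ ∂μ
        ≤ ∫⁻ _ in D ∩ A n, ENNReal.ofReal (ρ (n + 1) ^ s)⁻¹ ∂μ := by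
          refine setLIntegral_mono measurable_const fun y hy => ENNReal.ofReal_le_ofReal ?_
          have hρy : ρ (n + 1) < dist y x := not_le.1 hy.2.2
          gcongr
      _ = ENNReal.ofReal (ρ (n + 1) ^ s)⁻¹ * μ (D ∩ A n) := setLIntegral_const _ _
      _ ≤ ENNReal.ofReal (ρ (n + 1) ^ s)⁻¹ * ENNReal.ofReal (K * ρ n) := by
          gcongr
          exact (measure_mono (inter_subset_inter_right _ sdiff_subset)).trans
            (hgrowth _ (by positivity))
      _ = ENNReal.ofReal (2 ^ s * K * R ^ (1 - s) * q ^ n) := by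
          rw [← ENNReal.ofReal_mul (by positivity), inv_rpow_mul_half_pow_eq hR]
  have hsum := (hasSum_geometric_of_lt_one hq0 hq1).mul_left (2 ^ s * K * R ^ (1 - s))
  calc ∫⁻ y in D, ENNReal.ofReal (dist y x ^ s)⁻¹ ∂μ
      ≤ ∫⁻ y in ⋃ n, D ∩ A n, ENNReal.ofReal (dist y x ^ s)⁻¹ ∂μ := by
        refine lintegral_mono_set fun y hy => ?_
        simpa only [← inter_iUnion] using
          ⟨hy, ball_diff_singleton_subset_iUnion_closedBall_diff x (by norm_num) (by norm_num)
            (hD hy)⟩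
    _ ≤ ∑' n, ∫⁻ y in D ∩ A n, ENNReal.ofReal (dist y x ^ s)⁻¹ ∂μ := lintegral_iUnion_le _ _
    _ ≤ ∑' n, ENNReal.ofReal (2 ^ s * K * R ^ (1 - s) * q ^ n) := ENNReal.tsum_le_tsum hannulus
    _ = ENNReal.ofReal (2 ^ s / (1 - q) * K * R ^ (1 - s)) := by
        rw [← ENNReal.ofReal_tsum_of_nonneg (fun n => by positivity) hsum.summable, hsum.tsum_eq]
        ring_nf

section ThinBoundary

variable {d : ℕ} {μ : Measure (EuclideanSpace ℝ (Fin d))} {s t r : ℝ}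
  {x₀ x : EuclideanSpace ℝ (Fin d)} {D : Set (EuclideanSpace ℝ (Fin d))}

theorem HasThinBoundary.measure_inter_closedBall_le (hthin : HasThinBoundary μ t x₀ r)
    (hr : 0 < r) (hfin : μ (ball x₀ (2 * r)) ≠ ⊤) (hD : D ⊆ ball x₀ (2 * r))
    (hsep : ∀ y ∈ D, r ∈ uIcc (dist x x₀) (dist y x₀)) {ρ : ℝ} (hρ : 0 < ρ) :
    μ (D ∩ closedBall x ρ) ≤ ENNReal.ofReal (t * (μ (ball x₀ (2 * r))).toReal / r * ρ) := by
  calc μ (D ∩ closedBall x ρ)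
      ≤ μ {y ∈ ball x₀ (2 * r) | infDist y (sphere x₀ r) ≤ ρ / r * r} := by
        refine measure_mono fun y ⟨hyD, hyρ⟩ => ⟨hD hyD, ?_⟩
        rw [div_mul_cancel₀ _ hr.ne']
        exact (infDist_sphere_le_dist_of_mem_uIcc (hsep y hyD)).trans (mem_closedBall.1 hyρ)
    _ ≤ ENNReal.ofReal (t * (ρ / r)) * μ (ball x₀ (2 * r)) := hthin _ (div_pos hρ hr)
    _ = ENNReal.ofReal (t * (μ (ball x₀ (2 * r))).toReal / r * ρ) := by
        rw [← ENNReal.ofReal_toReal hfin, ← ENNReal.ofReal_mul' ENNReal.toReal_nonneg,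
          ENNReal.ofReal_toReal hfin]
        ring_nf

theorem HasThinBoundary.setLIntegral_norm_div_dist_rpow_le [IsLocallyFiniteMeasure μ]
    (hthin : HasThinBoundary μ t x₀ r) (hs : 0 ≤ s) (hs1 : s < 1) (ht : 0 ≤ t) (hr : 0 < r)
    {a : EuclideanSpace ℝ (Fin d) → EuclideanSpace ℝ (Fin d)} {M : ℝ} (hM : ∀ y, ‖a y‖ ≤ M)
    (hx : x ∈ ball x₀ (2 * r)) (hD : D ⊆ ball x₀ (2 * r) \ {x})
    (hsep : ∀ y ∈ D, r ∈ uIcc (dist x x₀) (dist y x₀)) :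
    ∫⁻ y in D, ENNReal.ofReal (‖a y‖ / dist y x ^ s) ∂μ
      ≤ ENNReal.ofReal (4 * t / (1 - 2 ^ (s - 1)) * M * thetaB μ s x₀ (2 * r)) := by
  have hM0 : 0 ≤ M := (norm_nonneg _).trans (hM 0)
  have hfin : μ (ball x₀ (2 * r)) ≠ ⊤ := measure_ball_lt_top.ne
  have hD4 : D ⊆ ball x (4 * r) \ {x} := fun y hy => by
    refine ⟨mem_ball.2 ?_, (hD hy).2⟩
    linarith [dist_triangle_right y x x₀, mem_ball.1 (hD hy).1, mem_ball.1 hx]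
  have hkernel := setLIntegral_inv_dist_rpow_le_of_measure_closedBall_le μ hs hs1
    (by positivity) (by positivity) hD4 fun ρ hρ =>
      hthin.measure_inter_closedBall_le hr hfin (fun y hy => (hD hy).1) hsep hρ
  calc ∫⁻ y in D, ENNReal.ofReal (‖a y‖ / dist y x ^ s) ∂μ
      ≤ ∫⁻ y in D, ENNReal.ofReal M * ENNReal.ofReal (dist y x ^ s)⁻¹ ∂μ := by
        refine lintegral_mono fun y => ?_
        rw [← ENNReal.ofReal_mul hM0, div_eq_mul_inv]
        gcongr
        exact hM y
    _ = ENNReal.ofReal M * ∫⁻ y in D, ENNReal.ofReal (dist y x ^ s)⁻¹ ∂μ :=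
        lintegral_const_mul' _ _ ENNReal.ofReal_ne_top
    _ ≤ ENNReal.ofReal M * ENNReal.ofReal (2 ^ s / (1 - 2 ^ (s - 1))
          * (t * (μ (ball x₀ (2 * r))).toReal / r) * (4 * r) ^ (1 - s)) :=
        mul_le_mul_right hkernel _
    _ = ENNReal.ofReal (4 * t / (1 - 2 ^ (s - 1)) * M * thetaB μ s x₀ (2 * r)) := by
        rw [← ENNReal.ofReal_mul hM0]
        congr 1
        have h4r : (4 * r) ^ s = 2 ^ s * (2 * r) ^ s := by
          rw [← Real.mul_rpow (by norm_num) (by positivity)]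
          ring_nf
        rw [thetaB, Real.rpow_sub (by positivity : 0 < 4 * r), Real.rpow_one, h4r]
        field_simp

end ThinBoundary

/-- If `B` has `t`-thin boundary and `a` is a bounded vector-valued function supported on
`2B \ B`, then `∫_{2B\B} |a(y)|/|y-x|^s dμ(y) ≤ C(s,d,t) ‖a‖_∞ θ(2B)` for all `x ∈ B`;
symmetrically, for `a` supported on `B`, `∫_B |a(y)|/|y-x|^s dμ(y) ≤ C ‖a‖_∞ θ(2B)` for all
`x ∈ 2B \ B`. -/
theorem stmt15 (d : ℕ) (s t : ℝ) (hs : 0 < s) (hs1 : s < 1) (ht : 0 < t) :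
    ∃ C : ℝ, 0 < C ∧
      ∀ μ : Measure (EuclideanSpace ℝ (Fin d)), IsLocallyFiniteMeasure μ →
        ∀ (x₀ : EuclideanSpace ℝ (Fin d)) (r : ℝ), 0 < r →
          HasThinBoundary μ t x₀ r →
          ∀ (a : EuclideanSpace ℝ (Fin d) → EuclideanSpace ℝ (Fin d)) (M : ℝ),
            (∀ y, ‖a y‖ ≤ M) →
            ((∀ y ∉ ball x₀ (2 * r) \ ball x₀ r, a y = 0) →
              ∀ x ∈ ball x₀ r,
                ∫⁻ y in ball x₀ (2 * r) \ ball x₀ r,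
                    ENNReal.ofReal (‖a y‖ / dist y x ^ s) ∂μ
                  ≤ ENNReal.ofReal (C * M * thetaB μ s x₀ (2 * r))) ∧
            ((∀ y ∉ ball x₀ r, a y = 0) →
              ∀ x ∈ ball x₀ (2 * r) \ ball x₀ r,
                ∫⁻ y in ball x₀ r, ENNReal.ofReal (‖a y‖ / dist y x ^ s) ∂μ
                  ≤ ENNReal.ofReal (C * M * thetaB μ s x₀ (2 * r))) := by
  refine ⟨4 * t / (1 - 2 ^ (s - 1)),
    div_pos (by positivity) (sub_pos.2 (two_rpow_sub_one_lt_one hs1)), ?_⟩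
  intro μ _ x₀ r hr hthin a M hM
  have hB2B : ball x₀ r ⊆ ball x₀ (2 * r) := ball_subset_ball (by linarith)
  constructor
  · intro _ x hx
    refine hthin.setLIntegral_norm_div_dist_rpow_le hs.le hs1 ht.le hr hM (hB2B hx)
      (fun y hy => ⟨hy.1, fun hyx => hy.2 (hyx ▸ hx)⟩) fun y hy => ?_
    exact mem_uIcc_of_le (mem_ball.1 hx).le (not_lt.1 (mt mem_ball.2 hy.2))
  · intro _ x hx
    refine hthin.setLIntegral_norm_div_dist_rpow_le hs.le hs1 ht.le hr hM hx.1
      (fun y hy => ⟨hB2B hy, fun hyx => hx.2 (hyx ▸ hy)⟩) fun y hy => ?_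
    exact mem_uIcc_of_ge (mem_ball.1 hy).le (not_lt.1 (mt mem_ball.2 hx.2))
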